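/- arXiv:2411.15338 — 6 statements merged into one kernel-verified Lean document; each statement's English description precedes it below -/
import Mathlib

section
/- Consider words over the alphabet {0, 1, $}. Define a one-step rewriting relation → by: u(0$1)w → u$w and u(1$0)w → u$w for any words u, w. Then for all x, y ∈ {0,1}*, the word x$y rewrites in finitely many steps to $ if and only if y equals the reversal of the bitwise complement of x (where the complement swaps 0 and 1). -/
inductive Alpha2 : Type
  | zero : Alpha2
  | one : Alpha2
  | dollar : Alpha2

open Alpha2

/-- One-step rewriting with rules `0$1 → $` and `1$0 → $` at any position. -/
inductive Step2 : List Alpha2 → List Alpha2 → Prop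
  | zo (u w : List Alpha2) :
      Step2 (u ++ [zero, dollar, one] ++ w) (u ++ [dollar] ++ w)
  | oz (u w : List Alpha2) :
      Step2 (u ++ [one, dollar, zero] ++ w) (u ++ [dollar] ++ w)

/-- Embedding of the binary alphabet `{0,1}` (as `Bool`) into `{0,1,$}`. -/
def emb2 (b : Bool) : Alpha2 := if b then one else zero

/-! The letter `$` occurs once in `x$y` and never in a binary word, so every redex is centred on
it: the only steps from `x$y` lead to `x'$y'` with `x = x'b` and `y = (¬b)y'`. Induction along the
reduction, and on `x` for the converse, gives both directions. -/

theorem List.map_eq_append_singleton_iff {α β : Type*} {f : α → β} (hf : Function.Injective f)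
    {l : List α} {u : List β} {a : α} :
    l.map f = u ++ [f a] ↔ ∃ l', l = l' ++ [a] ∧ l'.map f = u := by
  constructor
  · intro h
    obtain ⟨l', last, rfl, rfl, hlast⟩ := List.map_eq_append_iff.1 h
    obtain ⟨b, rfl, hb⟩ := List.map_eq_singleton_iff.1 hlast
    exact ⟨l', by rw [hf hb], rfl⟩
  · rintro ⟨l', rfl, rfl⟩
    simp

theorem emb2_injective : Function.Injective emb2 := by
  intro a b
  cases a <;> cases b <;> simp [emb2]

theorem dollar_notMem_map_emb2 (x : List Bool) : dollar ∉ x.map emb2 := by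
  simp only [List.mem_map, not_exists, not_and]
  intro b _
  cases b <;> simp [emb2]

theorem step2_iff {s z : List Alpha2} :
    Step2 s z ↔ ∃ u w b, s = u ++ [emb2 b, dollar, emb2 !b] ++ w ∧ z = u ++ [dollar] ++ w := by
  constructor
  · rintro (⟨u, w⟩ | ⟨u, w⟩)
    exacts [⟨u, w, false, rfl, rfl⟩, ⟨u, w, true, rfl, rfl⟩]
  · rintro ⟨u, w, b | b, rfl, rfl⟩
    exacts [Step2.zo u w, Step2.oz u w]

def dollarWord (x y : List Bool) : List Alpha2 := x.map emb2 ++ [dollar] ++ y.map emb2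

theorem dollarWord_eq_iff {x y : List Bool} {u w : List Alpha2} :
    dollarWord x y = u ++ dollar :: w ↔ x.map emb2 = u ∧ y.map emb2 = w := by
  rw [dollarWord, List.append_assoc, List.singleton_append,
    List.append_cons_inj_of_notMem (dollar_notMem_map_emb2 x) (dollar_notMem_map_emb2 y)]
  simp

theorem Step2.dollarWord_append (x y : List Bool) (b : Bool) :
    Step2 (dollarWord (x ++ [b]) ((!b) :: y)) (dollarWord x y) :=
  step2_iff.2 ⟨x.map emb2, y.map emb2, b, by simp [dollarWord], rfl⟩

theorem Step2.exists_eq_of_dollarWord {x y : List Bool} {z : List Alpha2}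
    (h : Step2 (dollarWord x y) z) :
    ∃ x' y' b, x = x' ++ [b] ∧ y = (!b) :: y' ∧ z = dollarWord x' y' := by
  obtain ⟨u, w, b, hs, rfl⟩ := step2_iff.1 h
  obtain ⟨hx, hy⟩ : x.map emb2 = u ++ [emb2 b] ∧ y.map emb2 = emb2 (!b) :: w :=
    dollarWord_eq_iff.1 (by simpa using hs)
  obtain ⟨x', rfl, rfl⟩ := (List.map_eq_append_singleton_iff emb2_injective).1 hx
  obtain ⟨c, y', rfl, hc, rfl⟩ := List.map_eq_cons_iff.1 hy
  exact ⟨x', y', b, rfl, by rw [emb2_injective hc], rfl⟩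

theorem dollarWord_reduces (x : List Bool) :
    Relation.ReflTransGen Step2 (dollarWord x (x.map (fun b => !b)).reverse) [dollar] := by
  induction x using List.reverseRecOn with
  | nil => rfl
  | append_singleton x b ih =>
    simpa using Relation.ReflTransGen.head (Step2.dollarWord_append _ _ b) ih

theorem eq_of_dollarWord_reduces {x y : List Bool}
    (h : Relation.ReflTransGen Step2 (dollarWord x y) [dollar]) :
    y = (x.map (fun b => !b)).reverse := by
  generalize hs : dollarWord x y = s at h
  induction h using Relation.ReflTransGen.head_induction_on generalizing x y with
  | refl =>
    obtain ⟨hx, hy⟩ := (dollarWord_eq_iff (u := []) (w := [])).1 hs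
    simp_all
  | head hstep _ ih =>
    subst hs
    obtain ⟨x', y', b, rfl, rfl, rfl⟩ := hstep.exists_eq_of_dollarWord
    simp [ih rfl]

theorem stmt2 (x y : List Bool) :
    Relation.ReflTransGen Step2 (x.map emb2 ++ [dollar] ++ y.map emb2) [dollar] ↔
      y = (x.map (fun b => !b)).reverse := by
  refine ⟨eq_of_dollarWord_reduces, ?_⟩
  rintro rfl
  exact dollarWord_reduces x
end

section
/- Consider words over the alphabet {A, B, C, D}. Define a one-step rewriting relation → by: u(AB)w → uw and u(CD)w → uw for any words u, w. Let φ be the letter map A ↦ B, C ↦ D. Then for all u ∈ {A,C}* and v ∈ {B,D}*, the word uv rewrites in finitely many steps to the empty word if and only if v is the reversal of the letterwise image φ(u). -/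
inductive Sym3 : Type
  | A : Sym3
  | B : Sym3
  | C : Sym3
  | D : Sym3

open Sym3

/-- One-step rewriting with deletion rules `AB → λ` and `CD → λ` at any position. -/
inductive Step3 : List Sym3 → List Sym3 → Prop
  | ab (u w : List Sym3) : Step3 (u ++ [A, B] ++ w) (u ++ w)
  | cd (u w : List Sym3) : Step3 (u ++ [C, D] ++ w) (u ++ w)

/-- The letter map `A ↦ B`, `C ↦ D` (identity elsewhere). -/
def phi3 : Sym3 → Sym3
  | A => B
  | C => D
  | s => s

/-! In `u ++ v` with `u` over `{A, C}` and `v` over `{B, D}` the only redex `AB` or `CD` sits at the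
junction, so every derivation to `[]` must cancel the last letter `x` of `u` against the first letter
`phi3 x` of `v` and continue on a word of the same shape. Conversely, `u ++ (u.map phi3).reverse`
collapses from the inside out. -/

theorem List.eq_concat_of_append_eq_append_pair {α : Type*} {u v p q : List α} {x y : α}
    (hx : x ∉ v) (hy : y ∉ u) (h : u ++ v = p ++ x :: y :: q) :
    u = p ++ [x] ∧ v = y :: q := by
  induction u generalizing p with
  | nil => subst h; simp at hx
  | cons a u ih =>
    cases p with
    | nil =>
      cases u with
      | nil => simp_all
      | cons b u =>
        simp only [List.cons_append, List.nil_append, List.cons.injEq] at h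
        obtain ⟨-, rfl, -⟩ := h
        simp at hy
    | cons c p =>
      simp only [List.cons_append, List.cons.injEq] at h
      obtain ⟨rfl, h⟩ := h
      simpa using ih (fun hyu => hy (List.mem_cons_of_mem a hyu)) h

theorem Step3.exists_split_of_append {u v w : List Sym3}
    (hu : ∀ a ∈ u, a = A ∨ a = C) (hv : ∀ a ∈ v, a = B ∨ a = D) (h : Step3 (u ++ v) w) :
    ∃ u' x v', u = u' ++ [x] ∧ v = phi3 x :: v' ∧ w = u' ++ v' := by
  generalize huv : u ++ v = s at h
  cases h with
  | ab p q =>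
    obtain ⟨rfl, rfl⟩ := List.eq_concat_of_append_eq_append_pair
      (fun hA => by simpa using hv A hA) (fun hB => by simpa using hu B hB) (by simpa using huv)
    exact ⟨p, A, q, rfl, rfl, rfl⟩
  | cd p q =>
    obtain ⟨rfl, rfl⟩ := List.eq_concat_of_append_eq_append_pair
      (fun hC => by simpa using hv C hC) (fun hD => by simpa using hu D hD) (by simpa using huv)
    exact ⟨p, C, q, rfl, rfl, rfl⟩

theorem reflTransGen_append_mirror (l r u : List Sym3) (hu : ∀ a ∈ u, a = A ∨ a = C) :
    Relation.ReflTransGen Step3 (l ++ (u ++ (u.map phi3).reverse) ++ r) (l ++ r) := by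
  induction u generalizing l r with
  | nil => simpa using Relation.ReflTransGen.refl
  | cons a u ih =>
    have hrest := ih (l ++ [a]) (phi3 a :: r) fun b hb => hu b (List.mem_cons_of_mem a hb)
    have hcancel : Step3 (l ++ [a, phi3 a] ++ r) (l ++ r) := by
      rcases hu a List.mem_cons_self with rfl | rfl
      · exact Step3.ab l r
      · exact Step3.cd l r
    simpa using hrest.tail (by simpa using hcancel)

theorem eq_reverse_map_of_reflTransGen {u v : List Sym3}
    (hu : ∀ a ∈ u, a = A ∨ a = C) (hv : ∀ a ∈ v, a = B ∨ a = D)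
    (h : Relation.ReflTransGen Step3 (u ++ v) []) : v = (u.map phi3).reverse := by
  generalize hw : u ++ v = w at h
  induction h using Relation.ReflTransGen.head_induction_on generalizing u v with
  | refl =>
    obtain ⟨rfl, rfl⟩ := List.append_eq_nil_iff.mp hw
    rfl
  | head hstep _ ih =>
    subst hw
    obtain ⟨u', x, v', rfl, rfl, rfl⟩ := Step3.exists_split_of_append hu hv hstep
    have hv' := ih (fun a ha => hu a (by simp [ha])) (fun a ha => hv a (by simp [ha])) rfl
    simp [hv']

theorem stmt3 (u v : List Sym3)
    (hu : ∀ a ∈ u, a = A ∨ a = C) (hv : ∀ a ∈ v, a = B ∨ a = D) :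
    Relation.ReflTransGen Step3 (u ++ v) [] ↔ v = (u.map phi3).reverse := by
  refine ⟨eq_reverse_map_of_reflTransGen hu hv, ?_⟩
  rintro rfl
  simpa using reflTransGen_append_mirror [] [] u hu
end

section
/- Let T be a set of terminal letters disjoint from {S, A, B, C}. For every u ∈ {CA, CAA}* and every v that is a concatenation of blocks from {BC, BBC} and letters from T, the word uSv contains neither CC nor AB as a factor. -/
inductive Sym8 (T : Type) : Type
  | S : Sym8 T
  | A : Sym8 T
  | B : Sym8 T
  | C : Sym8 T
  | term : T → Sym8 T

open Sym8

/-- The blocks `CA` and `CAA`. -/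
def ublock8 (T : Type) (b : Bool) : List (Sym8 T) :=
  if b then [C, A, A] else [C, A]

/-- A block `BC`, a block `BBC`, or a terminal letter from `T`. -/
def vblock8 (T : Type) : Bool ⊕ T → List (Sym8 T)
  | Sum.inl false => [B, C]
  | Sum.inl true => [B, B, C]
  | Sum.inr t => [term t]

/-!
Avoiding `CC` and `AB` is a condition on adjacent letters only, so it suffices to show that
every two neighbouring letters of `uSv` form an admissible pair. Inside the blocks `CA`, `CAA`,
`BC`, `BBC` this is checked directly. At a junction of two `u`-blocks the pair is `AC`; at a
junction of two `v`-items the first letter is `C` or terminal and the second is `B` or terminal;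
and `S` is admissible next to any letter.
-/

namespace List

variable {α β : Type*} {R : α → α → Prop}

theorem not_pair_infix_of_isChain {l : List α} {a b : α} (h : IsChain R l) (hab : ¬ R a b) :
    ¬ [a, b] <:+: l :=
  fun hi => hab (isChain_pair.1 (h.infix hi))

theorem isChain_flatten_map {f : β → List α} (hne : ∀ b, f b ≠ [])
    (hblock : ∀ b, IsChain R (f b))
    (hjoin : ∀ b b', ∀ x ∈ (f b).getLast?, ∀ y ∈ (f b').head?, R x y) (l : List β) :
    IsChain R (l.map f).flatten :=
  (isChain_flatten (by simpa [eq_comm] using fun b _ => hne b)).2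
    ⟨by simpa using fun b _ => hblock b, (isChain_map f).2 (pairwise_of_forall hjoin).isChain⟩

end List

namespace Sym8

variable {T : Type}

def Admissible : Sym8 T → Sym8 T → Prop
  | C, C => False
  | A, B => False
  | _, _ => True

theorem admissible_S_left (y : Sym8 T) : Admissible S y := by
  cases y <;> trivial

theorem admissible_S_right (x : Sym8 T) : Admissible x S := by
  cases x <;> trivial

theorem isChain_admissible_flatten_ublock8 (lu : List Bool) :
    (lu.map (ublock8 T)).flatten.IsChain Admissible :=
  List.isChain_flatten_map (by simp [ublock8])
    (by rintro (_ | _) <;> simp [ublock8, Admissible])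
    (by rintro (_ | _) (_ | _) <;> simp [ublock8, Admissible]) lu

theorem isChain_admissible_flatten_vblock8 (lv : List (Bool ⊕ T)) :
    (lv.map (vblock8 T)).flatten.IsChain Admissible :=
  List.isChain_flatten_map (by rintro ((_ | _) | _) <;> simp [vblock8])
    (by rintro ((_ | _) | _) <;> simp [vblock8, Admissible])
    (by rintro ((_ | _) | _) ((_ | _) | _) <;> simp [vblock8, Admissible]) lv

theorem isChain_admissible_sentential (lu : List Bool) (lv : List (Bool ⊕ T)) :
    ((lu.map (ublock8 T)).flatten ++ [S] ++ (lv.map (vblock8 T)).flatten).IsChain Admissible := by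
  rw [List.append_assoc, List.singleton_append]
  exact (isChain_admissible_flatten_ublock8 lu).append
    ((isChain_admissible_flatten_vblock8 lv).cons fun y _ => admissible_S_left y)
    (by simp [admissible_S_right])

end Sym8

/-- For `u ∈ {CA,CAA}*` and `v` a concatenation of blocks `BC`, `BBC` and
terminal letters, the word `uSv` contains neither `CC` nor `AB` as a factor. -/
theorem stmt8 (T : Type) (lu : List Bool) (lv : List (Bool ⊕ T)) :
    ¬ [C, C] <:+: ((lu.map (ublock8 T)).flatten ++ [S] ++ (lv.map (vblock8 T)).flatten) ∧
    ¬ [A, B] <:+: ((lu.map (ublock8 T)).flatten ++ [S] ++ (lv.map (vblock8 T)).flatten) :=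
  ⟨List.not_pair_infix_of_isChain (isChain_admissible_sentential lu lv) id,
    List.not_pair_infix_of_isChain (isChain_admissible_sentential lu lv) id⟩
end

section
/- For every α ∈ {AB, ABB}* and β ∈ {BA, BBA}*, the concatenation αβ does not contain AA as a factor. -/
inductive AB10 : Type
  | A : AB10
  | B : AB10

open AB10

def lblock10 (b : Bool) : List AB10 := if b then [A, B, B] else [A, B]

def rblock10 (b : Bool) : List AB10 := if b then [B, B, A] else [B, A]

/-! Every `A` of a left block is followed by a `B`, and every `A` of a right block is preceded by
one, so no two adjacent letters of `αβ` are both `A`: the word is a chain for the relation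
"one of the two letters is `B`". -/

namespace AB10

def NotBothA (x y : AB10) : Prop := x = B ∨ y = B

theorem not_infix_AA_of_isChain {w : List AB10} (h : w.IsChain NotBothA) : ¬ [A, A] <:+: w :=
  fun hAA => by simpa [NotBothA] using h.infix hAA

theorem isChain_append_of_getLast?_eq_B {u v : List AB10} (hu : u.IsChain NotBothA)
    (hv : v.IsChain NotBothA) (hB : ∀ x ∈ u.getLast?, x = B) : (u ++ v).IsChain NotBothA :=
  List.isChain_append.2 ⟨hu, hv, fun x hx _ _ => .inl (hB x hx)⟩

theorem isChain_append_of_head?_eq_B {u v : List AB10} (hu : u.IsChain NotBothA)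
    (hv : v.IsChain NotBothA) (hB : ∀ y ∈ v.head?, y = B) : (u ++ v).IsChain NotBothA :=
  List.isChain_append.2 ⟨hu, hv, fun _ _ y hy => .inr (hB y hy)⟩

theorem isChain_flatten_lblock10_append (la : List Bool) {m : List AB10}
    (hm : m.IsChain NotBothA) : ((la.map lblock10).flatten ++ m).IsChain NotBothA := by
  induction la with
  | nil => simpa using hm
  | cons b la ih =>
    rw [List.map_cons, List.flatten_cons, List.append_assoc]
    exact isChain_append_of_getLast?_eq_B (by cases b <;> simp [lblock10, NotBothA]) ih
      (by cases b <;> simp [lblock10])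

theorem isChain_flatten_rblock10 (lb : List Bool) :
    (lb.map rblock10).flatten.IsChain NotBothA ∧ ∀ y ∈ (lb.map rblock10).flatten.head?, y = B := by
  induction lb with
  | nil => simp
  | cons b lb ih =>
    rw [List.map_cons, List.flatten_cons]
    refine ⟨isChain_append_of_head?_eq_B (by cases b <;> simp [rblock10, NotBothA]) ih.1 ih.2, ?_⟩
    cases b <;> simp [rblock10]

end AB10

/-- For `α ∈ {AB,ABB}*` and `β ∈ {BA,BBA}*`, the word `αβ` contains no `AA`. -/
theorem stmt10 (la lb : List Bool) :
    ¬ [A, A] <:+: ((la.map lblock10).flatten ++ (lb.map rblock10).flatten) :=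
  AB10.not_infix_AA_of_isChain
    (AB10.isChain_flatten_lblock10_append la (AB10.isChain_flatten_rblock10 lb).1)
end

section
/- For every α ∈ {AB, ABB}* and β ∈ {BA, BBA}*, the concatenation αβ contains BBBB (four consecutive B's) as a factor if and only if α ends with the block ABB and β begins with the block BBA. -/
inductive AB11 : Type
  | A : AB11
  | B : AB11

open AB11

/-- The blocks `AB` (for `false`) and `ABB` (for `true`). -/
def lblock11 (b : Bool) : List AB11 := if b then [A, B, B] else [A, B]

/-- The blocks `BA` (for `false`) and `BBA` (for `true`). -/
def rblock11 (b : Bool) : List AB11 := if b then [B, B, A] else [B, A]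

deriving instance DecidableEq for AB11

open List in
lemma infix_append_tri11 {X : Type*} {u a b : List X} (h : u <:+: a ++ b) :
    u <:+: a ∨ u <:+: b ∨ ∃ s t, s ++ t = u ∧ s <:+ a ∧ t <+: b := by
  induction a with
  | nil => exact Or.inr (Or.inl h)
  | cons x a' ih =>
    rw [cons_append, infix_cons_iff] at h
    rcases h with h | h
    · rw [← cons_append] at h
      obtain ⟨r, hr⟩ := h
      rcases append_eq_append_iff.mp hr with ⟨w, hw1, hw2⟩ | ⟨w, hw1, hw2⟩
      · exact Or.inl (IsPrefix.isInfix ⟨w, hw1.symm⟩)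
      · exact Or.inr (Or.inr ⟨x :: a', w, hw1.symm, suffix_rfl, ⟨r, hw2.symm⟩⟩)
    · rcases ih h with h1 | h1 | ⟨s, t, h1, h2, h3⟩
      · exact Or.inl (infix_cons h1)
      · exact Or.inr (Or.inl h1)
      · exact Or.inr (Or.inr ⟨s, t, h1, h2.trans (suffix_cons x a'), h3⟩)

/-- flatten of lblocks never has a prefix starting with B -/
lemma lflat_head11 (la : List Bool) (r : List AB11) :
    ¬ (B :: r) <+: (la.map lblock11).flatten := by
  rintro ⟨q, hq⟩
  cases la with
  | nil => simp at hq
  | cons b la' =>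
    cases b <;> simp [lblock11] at hq

lemma noBBB_l11 (la : List Bool) : ¬ [B, B, B] <:+: (la.map lblock11).flatten := by
  induction la with
  | nil => simp
  | cons b la' ih =>
    intro h
    rw [List.map_cons, List.flatten_cons] at h
    rcases infix_append_tri11 h with h1 | h1 | ⟨s, t, h1, h2, h3⟩
    · cases b <;> revert h1 <;> simp [lblock11] <;> decide
    · exact ih h1
    · have hn : s.length ≤ 3 := by
        have := congrArg List.length h1; simp at this; omega
      have hs : s = List.take s.length [B, B, B] := by
        rw [← h1]; simp
      have ht : t = List.drop s.length [B, B, B] := by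
        rw [← h1]; simp
      set n := s.length with hn'
      interval_cases n <;> simp at hs ht <;> subst hs <;> subst ht
      · exact lflat_head11 la' _ h3
      · exact lflat_head11 la' _ h3
      · exact lflat_head11 la' _ h3
      · cases b <;> revert h2 <;> simp [lblock11] <;> decide

lemma noBBB_r11 (lb : List Bool) : ¬ [B, B, B] <:+: (lb.map rblock11).flatten := by
  induction lb with
  | nil => simp
  | cons b lb' ih =>
    intro h
    rw [List.map_cons, List.flatten_cons] at h
    rcases infix_append_tri11 h with h1 | h1 | ⟨s, t, h1, h2, h3⟩
    · cases b <;> revert h1 <;> simp [rblock11] <;> decide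
    · exact ih h1
    · have hn : s.length ≤ 3 := by
        have := congrArg List.length h1; simp at this; omega
      have hs : s = List.take s.length [B, B, B] := by
        rw [← h1]; simp
      have ht : t = List.drop s.length [B, B, B] := by
        rw [← h1]; simp
      set n := s.length with hn'
      interval_cases n <;> simp at hs ht <;> subst hs <;> try subst ht
      · exact ih h3.isInfix
      all_goals cases b <;> revert h2 <;> simp [rblock11] <;> decide

lemma BB_suffix11 (la : List Bool) (h : [B, B] <:+ (la.map lblock11).flatten) :
    la.getLast? = some true := by
  rcases List.eq_nil_or_concat la with rfl | ⟨la', b, rfl⟩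
  · simp at h
  · cases b
    · exfalso
      obtain ⟨p, hp⟩ := h
      rw [List.concat_eq_append, List.map_append, List.flatten_append] at hp
      have := congrArg List.reverse hp
      simp [lblock11] at this
    · simp

lemma BB_prefix11 (lb : List Bool) (h : [B, B] <+: (lb.map rblock11).flatten) :
    lb.head? = some true := by
  cases lb with
  | nil => simp at h
  | cons b lb' =>
    cases b
    · exfalso
      obtain ⟨q, hq⟩ := h
      simp [rblock11] at hq
    · simp

/-- For `α ∈ {AB,ABB}*` and `β ∈ {BA,BBA}*`, `αβ` contains `BBBB` as a factor
iff `α` ends with the block `ABB` and `β` begins with the block `BBA`. -/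
theorem stmt11 (la lb : List Bool) :
    [B, B, B, B] <:+: ((la.map lblock11).flatten ++ (lb.map rblock11).flatten) ↔
      la.getLast? = some true ∧ lb.head? = some true := by
  constructor
  · intro h
    rcases infix_append_tri11 h with h1 | h1 | ⟨s, t, h1, h2, h3⟩
    · exact absurd ((List.infix_append' [B] [B,B,B] []).trans (by simpa using h1))
        (noBBB_l11 la)
    · exact absurd ((List.infix_append' [B] [B,B,B] []).trans (by simpa using h1))
        (noBBB_r11 lb)
    · have hn : s.length ≤ 4 := by
        have := congrArg List.length h1; simp at this; omega
      have hs : s = List.take s.length [B, B, B, B] := by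
        rw [← h1]; simp
      have ht : t = List.drop s.length [B, B, B, B] := by
        rw [← h1]; simp
      set n := s.length with hn'
      interval_cases n <;> simp at hs ht <;> (try subst hs) <;> (try subst ht)
      · exact absurd ((List.prefix_append [B,B,B] [B]).trans h3).isInfix (noBBB_r11 lb)
      · exact absurd h3.isInfix (noBBB_r11 lb)
      · exact ⟨BB_suffix11 la h2, BB_prefix11 lb h3⟩
      · exact absurd h2.isInfix (noBBB_l11 la)
      · exact absurd ((List.suffix_append [B] [B,B,B]).trans h2).isInfix (noBBB_l11 la)
  · rintro ⟨hl, hr⟩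
    rcases List.eq_nil_or_concat la with rfl | ⟨la', b, rfl⟩
    · simp at hl
    · have hb : b = true := by simpa using hl
      subst hb
      cases lb with
      | nil => simp at hr
      | cons c lb' =>
        have hc : c = true := by simpa using hr
        subst hc
        refine ⟨(la'.map lblock11).flatten ++ [A], [A] ++ (lb'.map rblock11).flatten, ?_⟩
        simp [lblock11, rblock11]
end

section
/- Consider words over the alphabet {0, 1, $}. Define a one-step rewriting relation → with rules 0$0 → $, 1$1 → $ (applicable at any position) and $ → λ (deleting an occurrence of $). Then for all x, y ∈ {0,1}*, the word x$y rewrites in finitely many steps to the empty word if and only if y is the reversal of x. -/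
inductive Sym13 : Type
  | zero : Sym13
  | one : Sym13
  | dollar : Sym13

open Sym13

/-- One-step rewriting with rules `0$0 → $`, `1$1 → $` and `$ → λ`. -/
inductive Step13 : List Sym13 → List Sym13 → Prop
  | zz (u w : List Sym13) :
      Step13 (u ++ [zero, dollar, zero] ++ w) (u ++ [dollar] ++ w)
  | oo (u w : List Sym13) :
      Step13 (u ++ [one, dollar, one] ++ w) (u ++ [dollar] ++ w)
  | del (u w : List Sym13) :
      Step13 (u ++ [dollar] ++ w) (u ++ w)

def emb13 (b : Bool) : Sym13 := if b then one else zero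

/-! Letters other than `$` are exactly `0` and `1`, so one may argue about words `X$Y` with `X, Y`
free of `$`. Such a word has only two kinds of successors: `XY`, which contains no `$` and is
therefore irreducible, and `X'$Y'` where `X = X'c`, `Y = cY'`. Hence `X$Y` reaches the empty word
exactly when repeatedly cancelling the letters next to `$` empties both sides, i.e. when
`Y` is the reversal of `X`. -/

namespace Step13

theorem dollar_mem {s t : List Sym13} (h : Step13 s t) : dollar ∈ s := by
  cases h <;> simp

theorem append_context {s t : List Sym13} (h : Step13 s t) (u w : List Sym13) :
    Step13 (u ++ s ++ w) (u ++ t ++ w) := by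
  cases h with
  | zz a b => simpa using zz (u ++ a) (b ++ w)
  | oo a b => simpa using oo (u ++ a) (b ++ w)
  | del a b => simpa using del (u ++ a) (b ++ w)

theorem shrink {c : Sym13} (hc : c ≠ dollar) : Step13 [c, dollar, c] [dollar] := by
  cases c
  · exact zz [] []
  · exact oo [] []
  · exact absurd rfl hc

theorem eq_of_single_dollar {X Y t : List Sym13} (hX : dollar ∉ X) (hY : dollar ∉ Y)
    (h : Step13 (X ++ dollar :: Y) t) :
    t = X ++ Y ∨ ∃ u w c, X = u ++ [c] ∧ Y = c :: w ∧ t = u ++ dollar :: w := by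
  generalize hs : X ++ dollar :: Y = s at h
  cases h with
  | del u w =>
    obtain ⟨rfl, -, rfl⟩ := (List.append_cons_inj_of_notMem hX hY).mp (by simpa using hs)
    exact Or.inl rfl
  | zz u w =>
    obtain ⟨rfl, -, rfl⟩ :=
      (List.append_cons_inj_of_notMem (x₂ := u ++ [zero]) hX hY).mp (by simpa using hs)
    exact Or.inr ⟨u, w, zero, rfl, rfl, by simp⟩
  | oo u w =>
    obtain ⟨rfl, -, rfl⟩ :=
      (List.append_cons_inj_of_notMem (x₂ := u ++ [one]) hX hY).mp (by simpa using hs)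
    exact Or.inr ⟨u, w, one, rfl, rfl, by simp⟩

end Step13

open Relation

theorem eq_nil_of_reflTransGen_of_dollar_notMem {s : List Sym13} (hs : dollar ∉ s)
    (h : ReflTransGen Step13 s []) : s = [] := by
  rcases h.cases_head with rfl | ⟨t, hst, -⟩
  · rfl
  · exact absurd hst.dollar_mem hs

theorem reflTransGen_palindrome_dollar {X : List Sym13} (hX : dollar ∉ X) :
    ReflTransGen Step13 (X ++ dollar :: X.reverse) [dollar] := by
  induction X with
  | nil => rfl
  | cons c X ih =>
    have hc : c ≠ dollar := fun h => hX (h ▸ List.mem_cons_self)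
    have inner := (ih (fun h => hX (List.mem_cons_of_mem c h))).lift
      (fun s => [c] ++ s ++ [c]) fun _ _ h => h.append_context [c] [c]
    simpa using inner.tail (Step13.shrink hc)

theorem eq_reverse_of_reflTransGen_nil {X Y : List Sym13} (hX : dollar ∉ X) (hY : dollar ∉ Y)
    (h : ReflTransGen Step13 (X ++ dollar :: Y) []) : Y = X.reverse := by
  generalize hs : X ++ dollar :: Y = s at h
  induction h using ReflTransGen.head_induction_on generalizing X Y with
  | refl => simp at hs
  | head hstep hrest ih =>
    subst hs
    rcases hstep.eq_of_single_dollar hX hY with rfl | ⟨u, w, c, rfl, rfl, rfl⟩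
    · obtain ⟨rfl, rfl⟩ := List.append_eq_nil_iff.mp
        (eq_nil_of_reflTransGen_of_dollar_notMem (by simp [hX, hY]) hrest)
      rfl
    · simp only [List.mem_append, List.mem_cons, not_or] at hX hY
      simp [ih hX.1 hY.2 rfl]

theorem reflTransGen_nil_iff {X Y : List Sym13} (hX : dollar ∉ X) (hY : dollar ∉ Y) :
    ReflTransGen Step13 (X ++ dollar :: Y) [] ↔ Y = X.reverse := by
  refine ⟨eq_reverse_of_reflTransGen_nil hX hY, ?_⟩
  rintro rfl
  exact (reflTransGen_palindrome_dollar hX).tail (by simpa using Step13.del [] [])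

theorem dollar_notMem_map_emb13 (x : List Bool) : dollar ∉ x.map emb13 := by
  simp only [List.mem_map, not_exists, not_and]
  rintro (_ | _) - <;> simp [emb13]

theorem emb13_injective : Function.Injective emb13 := by
  rintro (_ | _) (_ | _) h <;> first | rfl | simp [emb13] at h

theorem stmt13 (x y : List Bool) :
    Relation.ReflTransGen Step13 (x.map emb13 ++ [dollar] ++ y.map emb13) [] ↔
      y = x.reverse := by
  rw [List.append_assoc, List.singleton_append,
    reflTransGen_nil_iff (dollar_notMem_map_emb13 x) (dollar_notMem_map_emb13 y),
    ← List.map_reverse, (List.map_injective_iff.mpr emb13_injective).eq_iff]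
end
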